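/- Let ι be a nonempty finite type with a distinguished element i₀, let H = EuclideanSpace ℂ (ι × Fin 2) and H' = EuclideanSpace ℂ ((ι × Fin 2) × Fin 2), and write δ_k for the standard basis vector of index k. For ψ ∈ EuclideanSpace ℂ ι and b ∈ Fin 2 write ψ ⊗ e_b for the vector of H with (ψ ⊗ e_b)(j, c) = ψ(j) if c = b and 0 otherwise. Let q ∈ [0, 1], let ψ₀, ψ₁ be unit vectors of EuclideanSpace ℂ ι, and let U be a linear isometric equivalence (unitary) of H with U δ_{(i₀,0)} = √q • (ψ₁ ⊗ e₁) + √(1 − q) • (ψ₀ ⊗ e₀). Let U ⊗ I and U⁻¹ ⊗ I denote the unitaries of H' acting as U (respectively U⁻¹) on each slice f(·, d) for d ∈ Fin 2 (i.e., ((U ⊗ I) f)(·, d) = U(f(·, d))), and let CNOT' be the unitary of H' induced by the index bijection ((j, c), d) ↦ ((j, c), c + d), with addition in Fin 2. Set V = (U⁻¹ ⊗ I) ∘ CNOT' ∘ (U ⊗ I). Then ⟪δ_{((i₀,0),1)}, V δ_{((i₀,0),0)}⟫ = q and ⟪δ_{((i₀,0),0)}, V δ_{((i₀,0),0)}⟫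 = 1 − q. -/

import Mathlib

open scoped InnerProductSpace

/-- `tensorE ψ b` is the vector `ψ ⊗ e_b` of `EuclideanSpace ℂ (ι × Fin 2)`:
`(ψ ⊗ e_b)(j, c) = ψ j` if `c = b`, and `0` otherwise. -/
noncomputable def tensorE {ι : Type*} [Fintype ι] (ψ : EuclideanSpace ℂ ι)
    (b : Fin 2) : EuclideanSpace ℂ (ι × Fin 2) :=
  WithLp.toLp 2 (fun p => if p.2 = b then ψ p.1 else 0)

/-- The slice `f(·, d)` of a vector `f` of `EuclideanSpace ℂ ((ι × Fin 2) × Fin 2)`. -/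
noncomputable def sliceE {ι : Type*} [Fintype ι]
    (f : EuclideanSpace ℂ ((ι × Fin 2) × Fin 2)) (d : Fin 2) :
    EuclideanSpace ℂ (ι × Fin 2) :=
  WithLp.toLp 2 (fun jc => f (jc, d))

/-!
Apply `U ⊗ I` to `δ_{(x, 0)}`: the first slice becomes `w = U δ_x` and the second stays `0`.
The CNOT then copies the flag qubit of `w` into the ancilla, so slice `b` becomes the branch
`maskE w b` of `w` with flag `b`. Reading coordinate `x` after `U⁻¹` gives
`⟪U δ_x, maskE w b⟫ = ⟪w, maskE w b⟫ = ‖maskE w b‖²`, since `maskE · b` is an orthogonal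
projection. With `w = √q (ψ₁ ⊗ e₁) + √(1 - q) (ψ₀ ⊗ e₀)` these weights are `q` and `1 - q`,
whatever the unit vectors `ψ₀, ψ₁` are.
-/

lemma LinearIsometryEquiv.symm_apply_eq_inner_apply_single {𝕜 κ : Type*} [RCLike 𝕜]
    [Fintype κ] [DecidableEq κ] (U : EuclideanSpace 𝕜 κ ≃ₗᵢ[𝕜] EuclideanSpace 𝕜 κ)
    (v : EuclideanSpace 𝕜 κ) (x : κ) :
    U.symm v x = ⟪U (EuclideanSpace.single x 1), v⟫_𝕜 := by
  rw [← U.apply_symm_apply v, U.inner_map_map, U.apply_symm_apply,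
    EuclideanSpace.inner_single_left, map_one, one_mul]

section

variable {ι : Type*}

noncomputable def maskE (v : EuclideanSpace ℂ (ι × Fin 2)) (b : Fin 2) :
    EuclideanSpace ℂ (ι × Fin 2) :=
  WithLp.toLp 2 (fun p => if p.2 = b then v p else 0)

lemma maskE_add (v w : EuclideanSpace ℂ (ι × Fin 2)) (b : Fin 2) :
    maskE (v + w) b = maskE v b + maskE w b := by
  ext p
  by_cases h : p.2 = b <;> simp [maskE, h]

lemma maskE_smul (a : ℂ) (v : EuclideanSpace ℂ (ι × Fin 2)) (b : Fin 2) :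
    maskE (a • v) b = a • maskE v b := by
  ext p
  by_cases h : p.2 = b <;> simp [maskE, h]

variable [Fintype ι]

lemma maskE_tensorE_self (ψ : EuclideanSpace ℂ ι) (b : Fin 2) :
    maskE (tensorE ψ b) b = tensorE ψ b := by
  ext ⟨j, d⟩
  by_cases hd : d = b <;> simp [maskE, tensorE, hd]

lemma maskE_tensorE_of_ne (ψ : EuclideanSpace ℂ ι) {b c : Fin 2} (h : c ≠ b) :
    maskE (tensorE ψ b) c = 0 := by
  ext ⟨j, d⟩
  by_cases hd : d = c <;> simp_all [maskE, tensorE]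

lemma inner_maskE_self (v : EuclideanSpace ℂ (ι × Fin 2)) (b : Fin 2) :
    ⟪v, maskE v b⟫_ℂ = (‖maskE v b‖ : ℂ) ^ 2 := by
  calc ⟪v, maskE v b⟫_ℂ = ⟪maskE v b, maskE v b⟫_ℂ := by
        simp only [PiLp.inner_apply, maskE]
        refine Finset.sum_congr rfl fun p _ => ?_
        split_ifs <;> simp
    _ = (‖maskE v b‖ : ℂ) ^ 2 := inner_self_eq_norm_sq_to_K _

lemma norm_tensorE (ψ : EuclideanSpace ℂ ι) (b : Fin 2) : ‖tensorE ψ b‖ = ‖ψ‖ := by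
  simp only [EuclideanSpace.norm_eq, tensorE, Fintype.sum_prod_type]
  congr 1
  refine Finset.sum_congr rfl fun j _ => ?_
  fin_cases b <;> simp [Fin.sum_univ_two]

lemma sliceE_cnot_eq_maskE {C : EuclideanSpace ℂ ((ι × Fin 2) × Fin 2) →
      EuclideanSpace ℂ ((ι × Fin 2) × Fin 2)}
    (hC : ∀ f j (c d : Fin 2), C f ((j, c), d) = f ((j, c), c + d))
    {f : EuclideanSpace ℂ ((ι × Fin 2) × Fin 2)} (hf : sliceE f 1 = 0) (d : Fin 2) :
    sliceE (C f) d = maskE (sliceE f 0) d := by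
  ext ⟨j, c⟩
  have hf' : ∀ c, f ((j, c), 1) = 0 := fun c => congrArg (· (j, c)) hf
  fin_cases c <;> fin_cases d <;> simp [sliceE, maskE, hC, hf']

variable [DecidableEq ι]

lemma sliceE_single (x : ι × Fin 2) (d d' : Fin 2) (a : ℂ) :
    sliceE (EuclideanSpace.single (x, d) a) d' =
      if d' = d then EuclideanSpace.single x a else 0 := by
  ext y
  by_cases h : d' = d <;> simp [sliceE, h, Prod.ext_iff]

lemma inner_single_uncompute_eq_norm_maskE_sq
    (U : EuclideanSpace ℂ (ι × Fin 2) ≃ₗᵢ[ℂ] EuclideanSpace ℂ (ι × Fin 2))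
    {UI UInvI CNOT' : EuclideanSpace ℂ ((ι × Fin 2) × Fin 2) →
      EuclideanSpace ℂ ((ι × Fin 2) × Fin 2)}
    (hUI : ∀ f d, sliceE (UI f) d = U (sliceE f d))
    (hUInvI : ∀ f d, sliceE (UInvI f) d = U.symm (sliceE f d))
    (hCNOT : ∀ f j (c d : Fin 2), CNOT' f ((j, c), d) = f ((j, c), c + d))
    (x : ι × Fin 2) (b : Fin 2) :
    ⟪EuclideanSpace.single (x, b) (1 : ℂ),
        UInvI (CNOT' (UI (EuclideanSpace.single (x, 0) 1)))⟫_ℂ =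
      (‖maskE (U (EuclideanSpace.single x 1)) b‖ : ℂ) ^ 2 := by
  have hslice : ∀ d, sliceE (UI (EuclideanSpace.single (x, 0) 1)) d =
      if d = 0 then U (EuclideanSpace.single x 1) else 0 := by
    intro d
    rw [hUI, sliceE_single]
    split_ifs <;> simp
  have hcnot := sliceE_cnot_eq_maskE hCNOT (by simpa using hslice 1) b
  rw [hslice 0, if_pos rfl] at hcnot
  rw [EuclideanSpace.inner_single_left, map_one, one_mul,
    ← inner_maskE_self, ← U.symm_apply_eq_inner_apply_single, ← hcnot, ← hUInvI]
  rfl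

end

theorem uncomputation_trick_amplitudes_general {ι : Type*} [Fintype ι] [DecidableEq ι]
    (i₀ : ι) (q : ℝ) (hq0 : 0 ≤ q) (hq1 : q ≤ 1)
    (ψ₀ ψ₁ : EuclideanSpace ℂ ι) (hψ₀ : ‖ψ₀‖ = 1) (hψ₁ : ‖ψ₁‖ = 1)
    (U : EuclideanSpace ℂ (ι × Fin 2) ≃ₗᵢ[ℂ] EuclideanSpace ℂ (ι × Fin 2))
    (hU : U (EuclideanSpace.single (i₀, (0 : Fin 2)) 1) =
      (Real.sqrt q : ℂ) • tensorE ψ₁ 1 + (Real.sqrt (1 - q) : ℂ) • tensorE ψ₀ 0)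
    (UI UInvI CNOT' : EuclideanSpace ℂ ((ι × Fin 2) × Fin 2) ≃ₗᵢ[ℂ]
      EuclideanSpace ℂ ((ι × Fin 2) × Fin 2))
    (hUI : ∀ (f : EuclideanSpace ℂ ((ι × Fin 2) × Fin 2)) (d : Fin 2),
      sliceE (UI f) d = U (sliceE f d))
    (hUInvI : ∀ (f : EuclideanSpace ℂ ((ι × Fin 2) × Fin 2)) (d : Fin 2),
      sliceE (UInvI f) d = U.symm (sliceE f d))
    (hCNOT : ∀ (f : EuclideanSpace ℂ ((ι × Fin 2) × Fin 2)) (j : ι) (c d : Fin 2),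
      CNOT' f ((j, c), d) = f ((j, c), c + d))
    (V : EuclideanSpace ℂ ((ι × Fin 2) × Fin 2) →
      EuclideanSpace ℂ ((ι × Fin 2) × Fin 2))
    (hV : ∀ f, V f = UInvI (CNOT' (UI f))) :
    ⟪EuclideanSpace.single ((i₀, (0 : Fin 2)), (1 : Fin 2)) (1 : ℂ),
        V (EuclideanSpace.single ((i₀, (0 : Fin 2)), (0 : Fin 2)) 1)⟫_ℂ = (q : ℂ) ∧
    ⟪EuclideanSpace.single ((i₀, (0 : Fin 2)), (0 : Fin 2)) (1 : ℂ),
        V (EuclideanSpace.single ((i₀, (0 : Fin 2)), (0 : Fin 2)) 1)⟫_ℂ =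
      ((1 - q : ℝ) : ℂ) := by
  have amplitude := inner_single_uncompute_eq_norm_maskE_sq U (UI := UI) (UInvI := UInvI)
    (CNOT' := CNOT') hUI hUInvI hCNOT (i₀, 0)
  have branch_one : maskE (U (EuclideanSpace.single (i₀, 0) 1)) 1 =
      (Real.sqrt q : ℂ) • tensorE ψ₁ 1 := by
    rw [hU, maskE_add, maskE_smul, maskE_smul, maskE_tensorE_self,
      maskE_tensorE_of_ne _ (by decide), smul_zero, add_zero]
  have branch_zero : maskE (U (EuclideanSpace.single (i₀, 0) 1)) 0 =
      (Real.sqrt (1 - q) : ℂ) • tensorE ψ₀ 0 := by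
    rw [hU, maskE_add, maskE_smul, maskE_smul, maskE_tensorE_self,
      maskE_tensorE_of_ne _ (by decide), smul_zero, zero_add]
  have branch_norm_sq : ∀ (r : ℝ), 0 ≤ r → ∀ (ψ : EuclideanSpace ℂ ι), ‖ψ‖ = 1 →
      ∀ b, (‖(Real.sqrt r : ℂ) • tensorE ψ b‖ : ℂ) ^ 2 = r := by
    intro r hr ψ hψ b
    rw [norm_smul, norm_tensorE, hψ, mul_one, Complex.norm_real,
      Real.norm_of_nonneg (Real.sqrt_nonneg r), ← Complex.ofReal_pow, Real.sq_sqrt hr]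
  rw [hV, amplitude, amplitude, branch_one, branch_zero]
  exact ⟨branch_norm_sq q hq0 ψ₁ hψ₁ 1, branch_norm_sq (1 - q) (by linarith) ψ₀ hψ₀ 0⟩

/-- The key amplitude computation of the uncomputation trick: with
`U δ_{(i₀,0)} = √q • (ψ₁ ⊗ e₁) + √(1−q) • (ψ₀ ⊗ e₀)` and
`V = (U⁻¹ ⊗ I) ∘ CNOT' ∘ (U ⊗ I)`, one has
`⟪δ_{((i₀,0),1)}, V δ_{((i₀,0),0)}⟫ = q` and
`⟪δ_{((i₀,0),0)}, V δ_{((i₀,0),0)}⟫ = 1 − q`, independently of the garbage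
states `ψ₀, ψ₁`. -/
theorem uncomputation_trick_amplitudes {ι : Type*} [Fintype ι] [DecidableEq ι] [Nonempty ι]
    (i₀ : ι) (q : ℝ) (hq0 : 0 ≤ q) (hq1 : q ≤ 1)
    (ψ₀ ψ₁ : EuclideanSpace ℂ ι) (hψ₀ : ‖ψ₀‖ = 1) (hψ₁ : ‖ψ₁‖ = 1)
    (U : EuclideanSpace ℂ (ι × Fin 2) ≃ₗᵢ[ℂ] EuclideanSpace ℂ (ι × Fin 2))
    (hU : U (EuclideanSpace.single (i₀, (0 : Fin 2)) 1) =
      (Real.sqrt q : ℂ) • tensorE ψ₁ 1 + (Real.sqrt (1 - q) : ℂ) • tensorE ψ₀ 0)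
    (UI UInvI CNOT' : EuclideanSpace ℂ ((ι × Fin 2) × Fin 2) ≃ₗᵢ[ℂ]
      EuclideanSpace ℂ ((ι × Fin 2) × Fin 2))
    (hUI : ∀ (f : EuclideanSpace ℂ ((ι × Fin 2) × Fin 2)) (d : Fin 2),
      sliceE (UI f) d = U (sliceE f d))
    (hUInvI : ∀ (f : EuclideanSpace ℂ ((ι × Fin 2) × Fin 2)) (d : Fin 2),
      sliceE (UInvI f) d = U.symm (sliceE f d))
    (hCNOT : ∀ (f : EuclideanSpace ℂ ((ι × Fin 2) × Fin 2)) (j : ι) (c d : Fin 2),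
      CNOT' f ((j, c), d) = f ((j, c), c + d))
    (V : EuclideanSpace ℂ ((ι × Fin 2) × Fin 2) →
      EuclideanSpace ℂ ((ι × Fin 2) × Fin 2))
    (hV : ∀ f, V f = UInvI (CNOT' (UI f))) :
    ⟪EuclideanSpace.single ((i₀, (0 : Fin 2)), (1 : Fin 2)) (1 : ℂ),
        V (EuclideanSpace.single ((i₀, (0 : Fin 2)), (0 : Fin 2)) 1)⟫_ℂ = (q : ℂ) ∧
    ⟪EuclideanSpace.single ((i₀, (0 : Fin 2)), (0 : Fin 2)) (1 : ℂ),
        V (EuclideanSpace.single ((i₀, (0 : Fin 2)), (0 : Fin 2)) 1)⟫_ℂ =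
      ((1 - q : ℝ) : ℂ) :=
  uncomputation_trick_amplitudes_general i₀ q hq0 hq1 ψ₀ ψ₁ hψ₀ hψ₁ U hU UI UInvI CNOT' hUI hUInvI
    hCNOT V hV
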